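/- Let G be a complete undirected graph on vertex set V with edge cost function c satisfying the triangle inequality (c(u,w) ≤ c(u,v) + c(v,w) for all u,v,w). Let T be a minimum spanning tree of G and let H be the Hamiltonian cycle obtained by listing vertices in the order of a preorder walk of T. Then the cost of H is at most twice the cost of an optimal Hamiltonian cycle of G. -/

import Mathlib

/-- A rooted tree with vertex labels in `V`. -/
inductive RTree (V : Type) : Type where
  | node : V → List (RTree V) → RTree V

namespace RTree

variable {V : Type}

/-- The root label of a rooted tree. -/
def root : RTree V → V
  | node v _ => v

/-- The preorder walk of a rooted tree: the list of vertices in the order in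
which they are first visited by a depth-first traversal. -/
def preorder : RTree V → List V
  | node v ts => v :: (ts.attach.map (fun ⟨t, _⟩ => preorder t)).flatten

/-- The total edge cost of a rooted tree with respect to a cost function `c`. -/
def weight (c : V → V → ℝ) : RTree V → ℝ
  | node v ts => (ts.attach.map (fun ⟨t, _⟩ => c v t.root + weight c t)).sum

end RTree

/-- A list of vertices is a Hamiltonian cycle (of the complete graph on `V`) when
it lists every vertex exactly once; closing it up cyclically gives the tour. -/
def IsHamiltonianList {V : Type} [Fintype V] (l : List V) : Prop :=
  l.Nodup ∧ ∀ v : V, v ∈ l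

/-- A rooted tree is a spanning tree of the complete graph on `V` if its preorder
walk lists every vertex exactly once. -/
def IsSpanning {V : Type} [Fintype V] (T : RTree V) : Prop :=
  IsHamiltonianList T.preorder

/-- The cost of the Hamiltonian cycle obtained by closing up the list `l`:
the sum of the costs of cyclically consecutive pairs. -/
def cycleCost {V : Type} (c : V → V → ℝ) (l : List V) : ℝ :=
  ((l.zip (l.rotate 1)).map (fun p => c p.1 p.2)).sum

/-!
Walking around `T` so that every edge is traversed once in each direction gives a closed walk
of cost `2 w(T)`, and the preorder tour arises from it by shortcutting repeated vertices, which
the triangle inequality makes no more expensive. In the induction, the closed walk from the root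
`r` through the preorder of a subtree is bounded by the two edges joining `r` to the subtree's
root plus the closed walk there. On the other side, an optimal tour with one edge deleted is a
Hamiltonian path, hence a spanning tree, so `w(T)` is at most the cost of the optimal tour.
-/

def pathCost {V : Type} (c : V → V → ℝ) (l : List V) : ℝ :=
  ((l.zip l.tail).map fun p => c p.1 p.2).sum

def loopCost {V : Type} (c : V → V → ℝ) (v : V) (l : List V) : ℝ :=
  pathCost c (v :: l ++ [v])

section Walks

variable {V : Type} {c : V → V → ℝ}

@[simp]
theorem pathCost_nil : pathCost c [] = 0 := rfl

@[simp]
theorem pathCost_singleton (v : V) : pathCost c [v] = 0 := rfl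

@[simp]
theorem pathCost_cons_cons (u v : V) (l : List V) :
    pathCost c (u :: v :: l) = c u v + pathCost c (v :: l) := by
  simp [pathCost]

theorem pathCost_append_cons (l₁ : List V) (v : V) (l₂ : List V) :
    pathCost c (l₁ ++ v :: l₂) = pathCost c (l₁ ++ [v]) + pathCost c (v :: l₂) := by
  induction l₁ with
  | nil => simp
  | cons a l ih =>
    cases l with
    | nil => simp
    | cons b l =>
      simp only [List.cons_append, pathCost_cons_cons] at ih ⊢
      rw [ih, add_assoc]

theorem pathCost_append_le_append_cons (hnonneg : ∀ u v, 0 ≤ c u v)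
    (htri : ∀ u v w, c u w ≤ c u v + c v w) (l₁ : List V) (v : V) (l₂ : List V) :
    pathCost c (l₁ ++ l₂) ≤ pathCost c (l₁ ++ v :: l₂) := by
  induction l₁ with
  | nil =>
    cases l₂ with
    | nil => simp
    | cons w l => simpa using hnonneg v w
  | cons a l ih =>
    cases l with
    | nil =>
      cases l₂ with
      | nil => simpa using hnonneg a v
      | cons w l => simpa [← add_assoc] using htri a v w
    | cons b l =>
      simpa only [List.cons_append, pathCost_cons_cons, add_le_add_iff_left] using ih

theorem cycleCost_cons (a : V) (l : List V) : cycleCost c (a :: l) = loopCost c a l := by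
  have hzip : (a :: l ++ [a]).zip (l ++ [a]) = (a :: l).zip (l ++ [a]) := by
    simpa using List.zip_append (l₁ := a :: l) (l₂ := l ++ [a]) (r₁ := [a]) (r₂ := []) (by simp)
  rw [cycleCost, loopCost, pathCost, List.rotate_cons_succ, List.rotate_zero,
    show (a :: l ++ [a]).tail = l ++ [a] from rfl, hzip]

theorem pathCost_le_cycleCost (hnonneg : ∀ u v, 0 ≤ c u v)
    (htri : ∀ u v w, c u w ≤ c u v + c v w) (a : V) (l : List V) :
    pathCost c (a :: l) ≤ cycleCost c (a :: l) := by
  simpa [cycleCost_cons, loopCost] using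
    pathCost_append_le_append_cons hnonneg htri (a :: l) a []

theorem loopCost_append_le (hnonneg : ∀ u v, 0 ≤ c u v)
    (htri : ∀ u v w, c u w ≤ c u v + c v w) (v : V) (l₁ l₂ : List V) :
    loopCost c v (l₁ ++ l₂) ≤ loopCost c v l₁ + loopCost c v l₂ := by
  have h := pathCost_append_le_append_cons hnonneg htri (v :: l₁) v (l₂ ++ [v])
  rw [pathCost_append_cons (v :: l₁) v (l₂ ++ [v])] at h
  simpa [loopCost] using h

theorem loopCost_flatten_le (hnonneg : ∀ u v, 0 ≤ c u v) (hdiag : ∀ v, c v v = 0)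
    (htri : ∀ u v w, c u w ≤ c u v + c v w) (v : V) (L : List (List V)) :
    loopCost c v L.flatten ≤ (L.map (loopCost c v)).sum := by
  induction L with
  | nil => simp [loopCost, hdiag]
  | cons l L ih =>
    simpa using (loopCost_append_le hnonneg htri v l L.flatten).trans (by gcongr)

theorem loopCost_cons_le (hnonneg : ∀ u v, 0 ≤ c u v)
    (htri : ∀ u v w, c u w ≤ c u v + c v w) (v r : V) (l : List V) :
    loopCost c v (r :: l) ≤ c v r + loopCost c r l + c r v := by
  have h := pathCost_append_le_append_cons hnonneg htri (r :: l) r [v]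
  rw [pathCost_append_cons (r :: l) r [v]] at h
  simp only [loopCost, List.cons_append, pathCost_cons_cons, pathCost_singleton] at h ⊢
  linarith

end Walks

namespace RTree

variable {V : Type}

@[elab_as_elim, induction_eliminator]
theorem induction {motive : RTree V → Prop}
    (node : ∀ v ts, (∀ t ∈ ts, motive t) → motive (node v ts)) : ∀ t, motive t
  | .node v ts => node v ts fun t _ => induction node t

@[simp]
theorem root_node (v : V) (ts : List (RTree V)) : (node v ts).root = v := rfl

theorem preorder_node (v : V) (ts : List (RTree V)) :
    (node v ts).preorder = v :: (ts.map preorder).flatten := by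
  rw [preorder, ← List.attach_map_val (l := ts) (f := preorder)]

theorem weight_node (c : V → V → ℝ) (v : V) (ts : List (RTree V)) :
    (node v ts).weight c = (ts.map fun t => c v t.root + t.weight c).sum := by
  rw [weight, ← List.attach_map_val (l := ts) (f := fun t => c v t.root + t.weight c)]

variable {c : V → V → ℝ}

theorem loopCost_root_preorder_tail_le (hnonneg : ∀ u v, 0 ≤ c u v)
    (hsymm : ∀ u v, c u v = c v u) (hdiag : ∀ v, c v v = 0)
    (htri : ∀ u v w, c u w ≤ c u v + c v w) (t : RTree V) :
    loopCost c t.root t.preorder.tail ≤ 2 * t.weight c := by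
  induction t with
  | node r ts ih =>
    have hchild : ∀ t ∈ ts, loopCost c r t.preorder ≤ 2 * (c r t.root + t.weight c) := by
      rintro ⟨s, us⟩ ht
      have hloop := loopCost_cons_le hnonneg htri r s (node s us).preorder.tail
      have hs := ih _ ht
      simp only [preorder_node, root_node, List.tail_cons] at hloop hs ⊢
      linarith [hsymm r s]
    rw [root_node, preorder_node, List.tail_cons]
    calc loopCost c r (ts.map preorder).flatten
        ≤ ((ts.map preorder).map (loopCost c r)).sum :=
          loopCost_flatten_le hnonneg hdiag htri r _
      _ ≤ (ts.map fun t => 2 * (c r t.root + t.weight c)).sum := by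
          rw [List.map_map]; exact List.sum_le_sum hchild
      _ = 2 * (node r ts).weight c := by rw [weight_node, List.sum_map_mul_left]

theorem cycleCost_preorder_le (hnonneg : ∀ u v, 0 ≤ c u v)
    (hsymm : ∀ u v, c u v = c v u) (hdiag : ∀ v, c v v = 0)
    (htri : ∀ u v w, c u w ≤ c u v + c v w) (t : RTree V) :
    cycleCost c t.preorder ≤ 2 * t.weight c := by
  obtain ⟨r, ts⟩ := t
  simpa [preorder_node, cycleCost_cons] using
    loopCost_root_preorder_tail_le hnonneg hsymm hdiag htri (node r ts)

def path : V → List V → RTree V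
  | v, [] => node v []
  | v, w :: l => node v [path w l]

theorem root_path (v : V) (l : List V) : (path v l).root = v := by
  cases l <;> rfl

theorem preorder_path (v : V) (l : List V) : (path v l).preorder = v :: l := by
  induction l generalizing v with
  | nil => simp [path, preorder_node]
  | cons w l ih => simp [path, preorder_node, ih]

theorem weight_path (v : V) (l : List V) : (path v l).weight c = pathCost c (v :: l) := by
  induction l generalizing v with
  | nil => simp [path, weight_node]
  | cons w l ih => simp [path, weight_node, ih, root_path]

end RTree

theorem preorder_mst_tsp_two_approximation_general {V : Type} [Fintype V]
    (c : V → V → ℝ)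
    (hnonneg : ∀ u v, 0 ≤ c u v)
    (hsymm : ∀ u v, c u v = c v u)
    (hdiag : ∀ v, c v v = 0)
    (htri : ∀ u v w, c u w ≤ c u v + c v w)
    (T : RTree V)
    (hmin : ∀ T' : RTree V, IsSpanning T' → RTree.weight c T ≤ RTree.weight c T')
    (Hopt : List V) (hHopt : IsHamiltonianList Hopt) :
    cycleCost c T.preorder ≤ 2 * cycleCost c Hopt := by
  obtain ⟨a, l, rfl⟩ := List.exists_cons_of_ne_nil (List.ne_nil_of_mem (hHopt.2 T.root))
  have hpath : IsSpanning (RTree.path a l) := by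
    rwa [IsSpanning, RTree.preorder_path]
  calc cycleCost c T.preorder
      ≤ 2 * T.weight c := T.cycleCost_preorder_le hnonneg hsymm hdiag htri
    _ ≤ 2 * (RTree.path a l).weight c := by gcongr; exact hmin _ hpath
    _ = 2 * pathCost c (a :: l) := by rw [RTree.weight_path]
    _ ≤ 2 * cycleCost c (a :: l) := by gcongr; exact pathCost_le_cycleCost hnonneg htri a l

/-- The 2-approximation guarantee of the MST-preorder heuristic for the metric TSP:
if `c` is a nonnegative symmetric cost function satisfying the triangle inequality,
`T` is a minimum spanning tree, and `H` is the Hamiltonian cycle obtained by listing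
the vertices in the order of a preorder walk of `T`, then the cost of `H` is at most
twice the cost of any (in particular, an optimal) Hamiltonian cycle. -/
theorem preorder_mst_tsp_two_approximation {V : Type} [Fintype V] [Nonempty V]
    (c : V → V → ℝ)
    (hnonneg : ∀ u v, 0 ≤ c u v)
    (hsymm : ∀ u v, c u v = c v u)
    (hdiag : ∀ v, c v v = 0)
    (htri : ∀ u v w, c u w ≤ c u v + c v w)
    (T : RTree V) (hT : IsSpanning T)
    (hmin : ∀ T' : RTree V, IsSpanning T' → RTree.weight c T ≤ RTree.weight c T')
    (Hopt : List V) (hHopt : IsHamiltonianList Hopt) :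
    cycleCost c T.preorder ≤ 2 * cycleCost c Hopt :=
  preorder_mst_tsp_two_approximation_general c hnonneg hsymm hdiag htri T hmin Hopt hHopt
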